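/- Let G = (V,E,L,Ω,v_I) be a parity formula and χ a local strategy on G. Then the macrostate e_χ⁻ of stationary χ-plays is closed under composition, i.e., e_χ⁻ ; e_χ⁻ ⊆ e_χ⁻; consequently e_χ ; e_χ = e_χ, where e_χ := e_χ⁻ ∪ Δ_V. -/
import Mathlib


/-- Labels of vertices of a parity formula over proposition letters `P`. -/
inductive PLabel (P : Type*) where
  | top | bot
  | pos (p : P)
  | neg (p : P)
  | conj | disj | dia | box

def PLabel.IsAtomic {P : Type*} : PLabel P → Prop
  | .top => True | .bot => True | .pos _ => True | .neg _ => True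
  | _ => False

/-- A parity formula `G = (V,E,L,Ω,v_I)` over proposition letters `P`. -/
structure ParityFormula (P V : Type*) where
  E : V → Set V
  L : V → PLabel P
  Ω : V → ℕ
  vI : V
  modal_succ : ∀ v, (L v = .dia ∨ L v = .box) → ∃! u, u ∈ E v
  atomic_succ : ∀ v, (L v).IsAtomic → E v = ∅
  lattice_succ : ∀ v, (L v = .conj ∨ L v = .disj) → (E v).Nonempty

/-- Macrostates over the vertex set `V`: subsets of `V × ℕ × V`
(middle components range over `Ran(Ω)` together with `0`). -/
abbrev Macrostate (V : Type*) := Set (V × ℕ × V)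

/-- Composition of macrostates. -/
def mcomp {V : Type*} (m m' : Macrostate V) : Macrostate V :=
  {t | ∃ k' k'' v', (t.1, k', v') ∈ m ∧ (v', k'', t.2.2) ∈ m' ∧ t.2.1 = max k' k''}

/-- The diagonal macrostate `Δ_U := {(u,0,u) | u ∈ U}`. -/
def mdiag {V : Type*} (U : Set V) : Macrostate V :=
  {t | t.1 ∈ U ∧ t.2.1 = 0 ∧ t.2.2 = t.1}

/-- `χ : V → V` is a local strategy on `G` if it selects a successor at every
disjunction vertex. -/
def IsLocalStrategy {P V : Type*} (G : ParityFormula P V) (χ : V → V) : Prop :=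
  ∀ v, G.L v = .disj → χ v ∈ G.E v

/-- `SP G χ v l u` : `v·l` is a stationary `χ`-play from `v` with last vertex `u`
(the play proceeds via `χ` at disjunctions and arbitrarily at conjunctions, and may
stop at any point). -/
inductive SP {P V : Type*} (G : ParityFormula P V) (χ : V → V) :
    V → List V → V → Prop
  | or0 (v) : G.L v = .disj → SP G χ v [χ v] (χ v)
  | and0 (v w) : G.L v = .conj → w ∈ G.E v → SP G χ v [w] w
  | orS {v l u} : SP G χ v l u → G.L u = .disj → SP G χ v (l ++ [χ u]) (χ u)
  | andS {v l u w} : SP G χ v l u → G.L u = .conj → w ∈ G.E u →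
      SP G χ v (l ++ [w]) w

/-- `Ω̃(v·l)`: the maximal priority on the play after the first vertex. -/
def maxPriority {P V : Type*} (G : ParityFormula P V) (l : List V) : ℕ :=
  (l.map G.Ω).foldr max 0

/-- The macrostate `e_χ⁻` of stationary `χ`-plays: triples `(v,n,u)` such that some
stationary `χ`-play from `v` ends in `u` and has `n` as its maximal priority after `v`. -/
def eMinus {P V : Type*} (G : ParityFormula P V) (χ : V → V) : Macrostate V :=
  {t | ∃ l, SP G χ t.1 l t.2.2 ∧ t.2.1 = maxPriority G l}

/-- `e_χ := e_χ⁻ ∪ Δ_V`. -/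
def eFull {P V : Type*} (G : ParityFormula P V) (χ : V → V) : Macrostate V :=
  eMinus G χ ∪ mdiag Set.univ

lemma maxPriority_append {P V : Type*} (G : ParityFormula P V) (l l' : List V) :
    maxPriority G (l ++ l') = max (maxPriority G l) (maxPriority G l') := by
  induction l with
  | nil => simp [maxPriority]
  | cons a t ih => simp [maxPriority, List.map_append] at *; omega

lemma SP_trans {P V : Type*} {G : ParityFormula P V} {χ : V → V} {v l u l' w} :
    SP G χ v l u → SP G χ u l' w → SP G χ v (l ++ l') w := by
  intro h1 h2
  induction h2 with
  | or0 hx => exact SP.orS h1 hx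
  | and0 _ hx hy => exact SP.andS h1 hx hy
  | orS h hu ih => rw [← List.append_assoc]; exact SP.orS ih hu
  | andS h hu hw ih => rw [← List.append_assoc]; exact SP.andS ih hu hw

/-- The macrostate `e_χ⁻` is closed under composition, and consequently
`e_χ ; e_χ = e_χ`. -/
theorem eMinus_comp_closed {P V : Type*} (G : ParityFormula P V) (χ : V → V)
    (hχ : IsLocalStrategy G χ) :
    mcomp (eMinus G χ) (eMinus G χ) ⊆ eMinus G χ ∧
    mcomp (eFull G χ) (eFull G χ) = eFull G χ := by
  have hm : mcomp (eMinus G χ) (eMinus G χ) ⊆ eMinus G χ := by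
    rintro ⟨v, k, w⟩ ⟨k', k'', u, ⟨l, h1, e1⟩, ⟨l', h2, e2⟩, e3⟩
    exact ⟨l ++ l', SP_trans h1 h2, by
      simp only [maxPriority_append]; simp at e1 e2 e3 ⊢; omega⟩
  refine ⟨hm, ?_⟩
  ext ⟨v, k, w⟩
  constructor
  · rintro ⟨k', k'', u, h1, h2, e⟩
    simp only [eFull, Set.mem_union, mdiag, Set.mem_setOf_eq] at h1 h2
    simp only [] at h1 h2 e
    rcases h1 with h1 | ⟨-, rfl, rfl⟩ <;> rcases h2 with h2 | ⟨-, rfl, h2⟩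
    · exact Or.inl (hm ⟨k', k'', u, h1, h2, e⟩)
    · subst h2; simp at e; subst e; exact Or.inl h1
    · simp at e; subst e; exact Or.inl h2
    · subst h2; simp at e; subst e
      exact Or.inr ⟨trivial, rfl, rfl⟩
  · rintro (h | h)
    · exact ⟨k, 0, w, Or.inl h, Or.inr ⟨trivial, rfl, rfl⟩, by simp⟩
    · obtain ⟨-, h0, hd⟩ := h
      simp only [] at h0 hd; subst h0; subst hd
      exact ⟨0, 0, w, Or.inr ⟨trivial, rfl, rfl⟩, Or.inr ⟨trivial, rfl, rfl⟩, by simp⟩
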